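/- arXiv:1708.01194 — 3 statements merged into one kernel-verified Lean document; each statement's English description precedes it below -/
import Mathlib

section
/- The generalized Fibonacci group F(2,3), defined by the presentation ⟨x₁, x₂, x₃ ∣ x₁x₂x₃⁻¹, x₂x₃x₁⁻¹, x₃x₁x₂⁻¹⟩, is isomorphic to the quaternion group Q₈ of order 8. -/
/-!
In `F(2,3)` the relations read `x₁x₂ = x₃`, `x₂x₃ = x₁`, `x₃x₁ = x₂` (generators `of 0`, `of 1`,
`of 2` below). Eliminating `x₁ = x₂x₃` leaves `y = x₂`, `z = x₃` with `yzy = z` and `zyz = y`,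
whence `y² = (yz)² = z²` and `yzy⁻¹ = z⁻¹`: the defining relations of
`Q₈ = ⟨x, y | x² = y², xyx⁻¹ = y⁻¹⟩`. Conversely `x₁ ↦ xa 1`, `x₂ ↦ xa 0`, `x₃ ↦ a 1` satisfies
the Fibonacci relations in `Q₈`, and the two homomorphisms are inverse to each other on generators.
-/

open Fin.NatCast in
/-- The relators of the generalized Fibonacci group `F(r,n)`:
for each `i : Fin n` the word `x_i x_{i+1} ⋯ x_{i+r-1} x_{i+r}⁻¹` (subscripts mod `n`). -/
def fibRels (r n : ℕ) [NeZero n] : Set (FreeGroup (Fin n)) :=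
  Set.range fun i : Fin n =>
    ((List.range r).map fun j => FreeGroup.of (i + (j : Fin n))).prod *
      (FreeGroup.of (i + (r : Fin n)))⁻¹

section GroupLemmas

variable {G : Type*} [Group G]

theorem zpow_eq_zpow_of_intCast_eq {g : G} {m : ℕ} (hg : g ^ m = 1) {s t : ℤ}
    (h : (s : ZMod m) = t) : g ^ s = g ^ t := by
  rw [ZMod.intCast_eq_intCast_iff] at h
  exact zpow_eq_zpow_iff_modEq.mpr
    (h.of_dvd (Int.natCast_dvd_natCast.mpr (orderOf_dvd_of_pow_eq_one hg)))

variable {x y : G}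

theorem zpow_mul_eq_mul_zpow_neg_of_conj_eq_inv (hxy : x * y * x⁻¹ = y⁻¹) (k : ℤ) :
    y ^ k * x = x * y ^ (-k) := by
  have h := conj_zpow (a := x) (b := y) (i := -k)
  rw [hxy, inv_zpow', neg_neg] at h
  rw [h]
  group

theorem pow_two_mul_eq_one_of_sq_eq_pow {n : ℕ} (hx : x ^ 2 = y ^ n)
    (hxy : x * y * x⁻¹ = y⁻¹) : y ^ (2 * n) = 1 := by
  have h : x * y ^ n * x⁻¹ = y ^ n := by rw [← hx]; group
  rw [← conj_pow, hxy, inv_pow] at h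
  rw [two_mul, pow_add]
  nth_rw 1 [← h]
  exact inv_mul_cancel _

theorem sq_eq_sq_of_mul_mul_eq (h₁ : x * y * x = y) (h₂ : y * x * y = x) : x ^ 2 = y ^ 2 :=
  calc x ^ 2 = x * (y * x * y) := by rw [h₂, sq]
    _ = (x * y * x) * y := by group
    _ = y ^ 2 := by rw [h₁, sq]

theorem conj_eq_inv_of_mul_mul_eq (h₁ : x * y * x = y) (h₂ : y * x * y = x) :
    x * y * x⁻¹ = y⁻¹ :=
  calc x * y * x⁻¹ = (x * y * x) * x⁻¹ ^ 2 := by group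
    _ = y⁻¹ := by rw [h₁, inv_pow, sq_eq_sq_of_mul_mul_eq h₁ h₂]; group

end GroupLemmas

namespace QuaternionGroup

variable {n : ℕ}

theorem a_one_zpow (k : ℤ) : (a 1 : QuaternionGroup n) ^ k = a k := by
  obtain ⟨k, rfl | rfl⟩ := k.eq_nat_or_neg
  · simp
  · rw [zpow_neg, zpow_natCast, a_one_pow]
    exact inv_eq_of_mul_eq_one_right (by simp [a_mul_a, a_zero])

variable {G : Type*} [Group G]

theorem hom_ext {f g : QuaternionGroup n →* G} (ha : f (a 1) = g (a 1))
    (hxa : f (xa 0) = g (xa 0)) : f = g := by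
  have h_a (i : ZMod (2 * n)) : f (a i) = g (a i) := by
    rw [← ZMod.intCast_zmod_cast i, ← a_one_zpow, map_zpow, map_zpow, ha]
  ext (i | i)
  · exact h_a i
  · rw [← zero_add i, ← xa_mul_a, map_mul, map_mul, hxa, h_a]

/-- The universal property of the presentation `⟨x, y | x² = yⁿ, xyx⁻¹ = y⁻¹⟩`. -/
def lift (x y : G) (hx : x ^ 2 = y ^ n) (hxy : x * y * x⁻¹ = y⁻¹) : QuaternionGroup n →* G where
  toFun
    | .a i => y ^ (i.cast : ℤ)
    | .xa i => x * y ^ (i.cast : ℤ)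
  map_one' := show y ^ ((0 : ZMod (2 * n)).cast : ℤ) = 1 by simp
  map_mul' := by
    have zpow_congr (s t : ℤ) (h : (s : ZMod (2 * n)) = t) : y ^ s = y ^ t :=
      zpow_eq_zpow_of_intCast_eq (pow_two_mul_eq_one_of_sq_eq_pow hx hxy) h
    rintro (i | i) (j | j)
    · change y ^ ((i + j).cast : ℤ) = y ^ (i.cast : ℤ) * y ^ (j.cast : ℤ)
      rw [← zpow_add]
      exact zpow_congr _ _ (by simp)
    · change x * y ^ ((j - i).cast : ℤ) = y ^ (i.cast : ℤ) * (x * y ^ (j.cast : ℤ))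
      rw [← mul_assoc, zpow_mul_eq_mul_zpow_neg_of_conj_eq_inv hxy, mul_assoc, ← zpow_add]
      exact congrArg (x * ·) (zpow_congr _ _ (by simp [sub_eq_neg_add]))
    · change x * y ^ ((i + j).cast : ℤ) = x * y ^ (i.cast : ℤ) * y ^ (j.cast : ℤ)
      rw [mul_assoc, ← zpow_add]
      exact congrArg (x * ·) (zpow_congr _ _ (by simp))
    · change y ^ ((n + j - i : ZMod (2 * n)).cast : ℤ) =
        x * y ^ (i.cast : ℤ) * (x * y ^ (j.cast : ℤ))
      rw [mul_assoc, ← mul_assoc (y ^ _), zpow_mul_eq_mul_zpow_neg_of_conj_eq_inv hxy,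
        ← mul_assoc, ← mul_assoc, ← sq, hx, mul_assoc, ← zpow_natCast, ← zpow_add, ← zpow_add]
      exact zpow_congr _ _ (by push_cast [ZMod.intCast_zmod_cast]; ring)

variable {x y : G} (hx : x ^ 2 = y ^ n) (hxy : x * y * x⁻¹ = y⁻¹)

@[simp]
theorem lift_a_one : lift x y hx hxy (a 1) = y := by
  change y ^ ((1 : ZMod (2 * n)).cast : ℤ) = y
  exact (zpow_eq_zpow_of_intCast_eq (pow_two_mul_eq_one_of_sq_eq_pow hx hxy) (by simp)).trans
    (zpow_one y)

@[simp]
theorem lift_xa_zero : lift x y hx hxy (xa 0) = x := by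
  change x * y ^ ((0 : ZMod (2 * n)).cast : ℤ) = x
  simp

end QuaternionGroup

section FibonacciRelations

variable {n : ℕ} [NeZero n]

open Fin.NatCast in
theorem fibRels_prod_of {r : ℕ} (i : Fin n) :
    ((List.range r).map fun j => (PresentedGroup.of (i + (j : Fin n)) :
      PresentedGroup (fibRels r n))).prod = PresentedGroup.of (i + (r : Fin n)) := by
  have h := PresentedGroup.mk_eq_mk_of_mul_inv_mem (rels := fibRels r n) ⟨i, rfl⟩
  rwa [map_list_prod, List.map_map] at h

open Fin.NatCast in
theorem fibRels_two_of_mul_of (i : Fin n) :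
    (PresentedGroup.of i * PresentedGroup.of (i + 1) : PresentedGroup (fibRels 2 n)) =
      PresentedGroup.of (i + 2) := by
  have h₁ : ((1 : ℕ) : Fin n) = 1 := rfl
  simpa [List.range_succ, h₁] using fibRels_prod_of (r := 2) i

open Fin.NatCast in
theorem fibRels_two_lift_eq_one {G : Type*} [Group G] {f : Fin n → G}
    (hf : ∀ i, f i * f (i + 1) = f (i + 2)) : ∀ r ∈ fibRels 2 n, FreeGroup.lift f r = 1 := by
  rintro _ ⟨i, rfl⟩
  simp [List.range_succ, hf]

end FibonacciRelations

namespace FibonacciTwoThree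

open PresentedGroup QuaternionGroup

local notation "F₂₃" => PresentedGroup (fibRels 2 3)

theorem of_zero_mul_of_one : (of 0 * of 1 : F₂₃) = of 2 := by
  simpa using fibRels_two_of_mul_of (n := 3) 0

theorem of_one_mul_of_two : (of 1 * of 2 : F₂₃) = of 0 := by
  simpa using fibRels_two_of_mul_of (n := 3) 1

theorem of_two_mul_of_zero : (of 2 * of 0 : F₂₃) = of 1 := by
  simpa using fibRels_two_of_mul_of (n := 3) 2

theorem of_one_mul_of_two_mul_of_one : (of 1 * of 2 * of 1 : F₂₃) = of 2 := by
  rw [of_one_mul_of_two, of_zero_mul_of_one]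

theorem of_two_mul_of_one_mul_of_two : (of 2 * of 1 * of 2 : F₂₃) = of 1 := by
  rw [mul_assoc, of_one_mul_of_two, of_two_mul_of_zero]

def toQuaternion : F₂₃ →* QuaternionGroup 2 :=
  toGroup (f := ![xa 1, xa 0, a 1]) (fibRels_two_lift_eq_one (by decide))

def ofQuaternion : QuaternionGroup 2 →* F₂₃ :=
  lift (of 1) (of 2)
    (sq_eq_sq_of_mul_mul_eq of_one_mul_of_two_mul_of_one of_two_mul_of_one_mul_of_two)
    (conj_eq_inv_of_mul_mul_eq of_one_mul_of_two_mul_of_one of_two_mul_of_one_mul_of_two)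

@[simp]
theorem toQuaternion_of (i : Fin 3) : toQuaternion (of i) = ![xa 1, xa 0, a 1] i :=
  toGroup.of _

@[simp]
theorem ofQuaternion_a_one : ofQuaternion (a 1) = of 2 :=
  lift_a_one _ _

@[simp]
theorem ofQuaternion_xa_zero : ofQuaternion (xa 0) = of 1 :=
  lift_xa_zero _ _

theorem toQuaternion_comp_ofQuaternion : toQuaternion.comp ofQuaternion = .id _ :=
  QuaternionGroup.hom_ext (by simp) (by simp)

theorem ofQuaternion_comp_toQuaternion : ofQuaternion.comp toQuaternion = .id _ := by
  ext i
  fin_cases i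
  · change ofQuaternion (xa 1) = of 0
    rw [← zero_add (1 : ZMod 4), ← xa_mul_a, map_mul, ofQuaternion_xa_zero, ofQuaternion_a_one,
      of_one_mul_of_two]
  all_goals simp

end FibonacciTwoThree

/-- `F(2,3)` is isomorphic to the quaternion group `Q₈` of order 8. -/
theorem F_2_3_isQ8 : Nonempty (PresentedGroup (fibRels 2 3) ≃* QuaternionGroup 2) :=
  ⟨FibonacciTwoThree.toQuaternion.toMulEquiv FibonacciTwoThree.ofQuaternion
    FibonacciTwoThree.ofQuaternion_comp_toQuaternion
    FibonacciTwoThree.toQuaternion_comp_ofQuaternion⟩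
end

section
/- The generalized Fibonacci group F(3,3), defined by the presentation ⟨x₁, x₂, x₃ ∣ x₁x₂x₃x₁⁻¹, x₂x₃x₁x₂⁻¹, x₃x₁x₂x₃⁻¹⟩, is cyclic of order 2. -/
theorem PresentedGroup.mem_zpowers_of_forall_of_eq {α : Type*} {rels : Set (FreeGroup α)}
    {g : PresentedGroup rels} (h : ∀ a, of a = g) (x : PresentedGroup rels) :
    x ∈ Subgroup.zpowers g := by
  rw [Subgroup.zpowers_eq_closure]
  refine Subgroup.closure_mono ?_ (closure_range_of rels ▸ Subgroup.mem_top x)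
  rintro _ ⟨a, rfl⟩
  exact h a

open Fin.NatCast in
theorem fibRels_prod_of_eq_of {r n : ℕ} [NeZero n] (i : Fin n) :
    ((List.range r).map fun j =>
        (PresentedGroup.of (i + (j : Fin n)) : PresentedGroup (fibRels r n))).prod =
      PresentedGroup.of (i + (r : Fin n)) := by
  have h := PresentedGroup.one_of_mem (rels := fibRels r n) ⟨i, rfl⟩
  rwa [map_mul, map_inv, mul_inv_eq_one, map_list_prod, List.map_map] at h

theorem lift_const_eq_one_of_mem_fibRels {r n : ℕ} [NeZero n] {H : Type*} [Group H]
    {a : H} (ha : a ^ r = a) : ∀ w ∈ fibRels r n, FreeGroup.lift (fun _ => a) w = 1 := by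
  rintro _ ⟨i, rfl⟩
  rw [map_mul, map_inv, map_list_prod, List.map_map, mul_inv_eq_one]
  simp only [Function.comp_def, FreeGroup.lift_apply_of, List.map_const', List.prod_replicate]
  simpa using ha

namespace F33

local notation "F₃₃" => PresentedGroup (fibRels 3 3)

open Fin.NatCast in
theorem of_add_one_mul_of_add_two (i : Fin 3) :
    (PresentedGroup.of (i + 1) * PresentedGroup.of (i + 2) : F₃₃) = 1 := by
  simpa [List.range_succ] using fibRels_prod_of_eq_of (r := 3) i

theorem of_add_one (i : Fin 3) :
    (PresentedGroup.of (i + 1) : F₃₃) = PresentedGroup.of i := by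
  have h₁ := of_add_one_mul_of_add_two i
  have h₂ := of_add_one_mul_of_add_two (i + 1)
  rw [show i + 1 + 1 = i + 2 by grind, show i + 1 + 2 = i by grind] at h₂
  rw [eq_inv_of_mul_eq_one_left h₁, eq_inv_of_mul_eq_one_left h₂, inv_inv]

theorem of_eq_of_zero (i : Fin 3) : (PresentedGroup.of i : F₃₃) = PresentedGroup.of 0 := by
  fin_cases i
  · rfl
  · exact of_add_one 0
  · exact (of_add_one 1).trans (of_add_one 0)

theorem of_zero_sq : (PresentedGroup.of 0 : F₃₃) ^ 2 = 1 := by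
  simpa [pow_two, of_eq_of_zero] using of_add_one_mul_of_add_two 0

end F33

/-- `F(3,3)` is cyclic of order 2. -/
theorem F_3_3_cyclic2 :
    Nonempty (PresentedGroup (fibRels 3 3) ≃* Multiplicative (ZMod 2)) := by
  let χ : PresentedGroup (fibRels 3 3) →* Multiplicative (ZMod 2) :=
    PresentedGroup.toGroup
      (lift_const_eq_one_of_mem_fibRels (a := Multiplicative.ofAdd 1) (by decide))
  have hx : (PresentedGroup.of 0 : PresentedGroup (fibRels 3 3)) ≠ 1 := fun h => by
    simpa [χ, PresentedGroup.toGroup.of] using congrArg χ h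
  have hcard : Nat.card (PresentedGroup (fibRels 3 3)) = 2 := by
    rw [← orderOf_eq_card_of_forall_mem_zpowers
      (PresentedGroup.mem_zpowers_of_forall_of_eq F33.of_eq_of_zero)]
    exact orderOf_eq_prime F33.of_zero_sq hx
  exact ⟨mulEquivOfPrimeCardEq hcard (by simp)⟩
end

section
/- For every n ≥ 5, the generalized Fibonacci group F(n+2, n) surjects onto a nontrivial cyclic group; in particular, F(n+2, n) is a nontrivial group. -/
/-! Sending every generator of `F(m+1, n)` to a generator of `ℤ/m` kills each relator, which
becomes `(m + 1) • 1 - 1 = m • 1 = 0`. For `F(n+2, n)` this gives a surjection onto `ℤ/(n+1)`. -/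

theorem lift_const_of_mem_fibRels {G : Type*} [Group G] (g : G) {r n : ℕ} [NeZero n]
    {w : FreeGroup (Fin n)} (hw : w ∈ fibRels r n) :
    FreeGroup.lift (fun _ => g) w = g ^ r * g⁻¹ := by
  obtain ⟨i, rfl⟩ := hw
  simp [map_list_prod, Function.comp_def]

def fibToZMod (m n : ℕ) [NeZero n] :
    PresentedGroup (fibRels (m + 1) n) →* Multiplicative (ZMod m) :=
  PresentedGroup.toGroup (f := fun _ => Multiplicative.ofAdd 1) fun _ hw => by
    rw [lift_const_of_mem_fibRels _ hw, pow_succ, mul_inv_cancel_right, ← ofAdd_nsmul,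
      nsmul_one, ZMod.natCast_self, ofAdd_zero]

theorem fibToZMod_of (m n : ℕ) [NeZero n] (i : Fin n) :
    fibToZMod m n (PresentedGroup.of i) = Multiplicative.ofAdd 1 :=
  PresentedGroup.toGroup.of _

theorem fibToZMod_surjective (m n : ℕ) [NeZero n] : Function.Surjective (fibToZMod m n) := by
  intro y
  refine ⟨PresentedGroup.of 0 ^ (y.toAdd.cast : ℤ), ?_⟩
  rw [map_zpow, fibToZMod_of, ← ofAdd_zsmul, zsmul_one, ZMod.intCast_zmod_cast, ofAdd_toAdd]

open Fin.NatCast in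
theorem F_np2_n_surjects_general (n : ℕ) [NeZero n] :
    (∃ m : ℕ, 2 ≤ m ∧ ∃ f : PresentedGroup (fibRels (n + 2) n) →* Multiplicative (ZMod m),
        Function.Surjective f) ∧
      Nontrivial (PresentedGroup (fibRels (n + 2) n)) := by
  have two_le : 2 ≤ n + 1 := Nat.succ_le_succ NeZero.one_le
  have : Fact (1 < n + 1) := ⟨two_le⟩
  have hsurj := fibToZMod_surjective (n + 1) n
  exact ⟨⟨n + 1, two_le, _, hsurj⟩, hsurj.nontrivial⟩

/-- For every `n ≥ 5`, the group `F(n+2, n)` surjects onto a nontrivial cyclic group;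
in particular `F(n+2, n)` is nontrivial. -/
theorem F_np2_n_surjects (n : ℕ) [NeZero n] (hn : 5 ≤ n) :
    (∃ m : ℕ, 2 ≤ m ∧ ∃ f : PresentedGroup (fibRels (n + 2) n) →* Multiplicative (ZMod m),
        Function.Surjective f) ∧
      Nontrivial (PresentedGroup (fibRels (n + 2) n)) :=
  F_np2_n_surjects_general n
end
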